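/- arXiv:math/0202079 — 4 statements merged into one kernel-verified Lean document; each statement's English description precedes it below -/
import Mathlib

section
/- Let B be a commutative Poisson algebra over ℂ and J ⊆ B a Poisson ideal (an ideal with {J, B} ⊆ J). Then the radical of J is also a Poisson ideal. -/
/-!
Fix `b` and put `D x = {x, b}`; by the Leibniz rule `D` obeys `D (x * y) = x * D y + y * D x`
and the hypothesis says `D J ⊆ J`. If `a ^ (m + 1) * (D a) ^ j ∈ J`, applying `D`, multiplying
by `D a` and subtracting `j * D (D a)` times the same element leaves
`(m + 1) * a ^ m * (D a) ^ (j + 2)` in `J`. Dividing by `m + 1` (possible over `ℚ`) trades one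
power of `a` for two of `D a`, so from `a ^ n ∈ J` we reach `(D a) ^ (2 * n) ∈ J`.
-/

section Leibniz

variable {B : Type*} [CommRing B] {D : B → B}

theorem leibniz_one (hD : ∀ x y, D (x * y) = x * D y + y * D x) : D 1 = 0 := by
  simpa using hD 1 1

theorem leibniz_pow_succ (hD : ∀ x y, D (x * y) = x * D y + y * D x) (x : B) (m : ℕ) :
    D (x ^ (m + 1)) = (m + 1) * x ^ m * D x := by
  induction m with
  | zero => simp
  | succ m ih =>
    rw [pow_succ', hD, ih]
    push_cast
    ring

theorem mul_leibniz_pow (hD : ∀ x y, D (x * y) = x * D y + y * D x) (x : B) (n : ℕ) :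
    x * D (x ^ n) = n * x ^ n * D x := by
  cases n with
  | zero => simp [leibniz_one hD]
  | succ m =>
    rw [leibniz_pow_succ hD]
    push_cast
    ring

variable [Algebra ℚ B] (hD : ∀ x y, D (x * y) = x * D y + y * D x)
  {J : Ideal B} (hJ : ∀ x ∈ J, D x ∈ J)
include hD hJ

theorem pow_mul_apply_pow_add_two_mem {a : B} {m j : ℕ}
    (h : a ^ (m + 1) * D a ^ j ∈ J) : a ^ m * D a ^ (j + 2) ∈ J := by
  have hcomb : D a * D (a ^ (m + 1) * D a ^ j) - j * D (D a) * (a ^ (m + 1) * D a ^ j) ∈ J :=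
    J.sub_mem (J.mul_mem_left _ (hJ _ h)) (J.mul_mem_left _ h)
  have heq : D a * D (a ^ (m + 1) * D a ^ j) - j * D (D a) * (a ^ (m + 1) * D a ^ j) =
      ((m + 1 : ℕ) : B) * (a ^ m * D a ^ (j + 2)) := by
    have hc := mul_leibniz_pow hD (D a) j
    rw [hD, leibniz_pow_succ hD]
    push_cast
    linear_combination a ^ (m + 1) * hc
  have hunit : IsUnit ((m + 1 : ℕ) : B) := by
    simpa using (Nat.cast_add_one_ne_zero (R := ℚ) m).isUnit.map (algebraMap ℚ B)
  rwa [heq, J.unit_mul_mem_iff_mem hunit] at hcomb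

theorem apply_pow_add_two_mul_mem {a : B} {m j : ℕ}
    (h : a ^ m * D a ^ j ∈ J) : D a ^ (j + 2 * m) ∈ J := by
  induction m generalizing j with
  | zero => simpa using h
  | succ m ih =>
    have := ih (pow_mul_apply_pow_add_two_mem hD hJ h)
    rwa [show j + 2 + 2 * m = j + 2 * (m + 1) by ring] at this

theorem apply_mem_radical_of_leibniz {a : B} (ha : a ∈ J.radical) : D a ∈ J.radical := by
  obtain ⟨n, hn⟩ := ha
  exact ⟨2 * n, by simpa using apply_pow_add_two_mul_mem hD hJ (j := 0) (by simpa using hn)⟩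

end Leibniz

theorem radical_of_poisson_ideal_is_poisson_general
    (B : Type*) [CommRing B] [Algebra ℂ B]
    (bracket : B →ₗ[ℂ] B →ₗ[ℂ] B)
    (leibniz : ∀ a b c : B, bracket (a * b) c = a * bracket b c + b * bracket a c)
    (J : Ideal B) (hJ : ∀ a ∈ J, ∀ b : B, bracket a b ∈ J) :
    ∀ a ∈ J.radical, ∀ b : B, bracket a b ∈ J.radical := by
  let _ : Algebra ℚ B := ((algebraMap ℂ B).comp (algebraMap ℚ ℂ)).toAlgebra
  intro a ha b
  exact apply_mem_radical_of_leibniz (D := fun x => bracket x b) (fun x y => leibniz x y b)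
    (fun x hx => hJ x hx b) ha

/-- If `B` is a commutative Poisson algebra over `ℂ` (a commutative
`ℂ`-algebra with a bilinear Lie bracket satisfying the Leibniz rule) and `J` is a
Poisson ideal (`{J, B} ⊆ J`), then the radical of `J` is also a Poisson ideal. -/
theorem radical_of_poisson_ideal_is_poisson
    (B : Type*) [CommRing B] [Algebra ℂ B]
    (bracket : B →ₗ[ℂ] B →ₗ[ℂ] B)
    (antisymm : ∀ a b : B, bracket a b = - bracket b a)
    (jacobi : ∀ a b c : B,
      bracket a (bracket b c) = bracket (bracket a b) c + bracket b (bracket a c))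
    (leibniz : ∀ a b c : B, bracket (a * b) c = a * bracket b c + b * bracket a c)
    (J : Ideal B) (hJ : ∀ a ∈ J, ∀ b : B, bracket a b ∈ J) :
    ∀ a ∈ J.radical, ∀ b : B, bracket a b ∈ J.radical :=
  radical_of_poisson_ideal_is_poisson_general B bracket leibniz J hJ
end

section
/- Let B be a commutative Noetherian Poisson algebra over ℂ and J ⊆ B a Poisson ideal. Then every minimal prime ideal over J is a Poisson ideal. -/
/-!
A Poisson ideal is one stable under every derivation `D_c = {-, c}`, so it suffices to show that
minimal primes over a `D`-stable ideal `I` of a `ℚ`-algebra are `D`-stable. Differentiating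
`aⁿ ∈ I` repeatedly (dividing by the integer factors that appear) gives `(D a)^(2n) ∈ I`, so the
radical of `I` is again `D`-stable. In a `D`-stable radical ideal `K`, `x y ∈ K` forces
`x D y ∈ K`, because `(x D y)² = x D y · D (x y) - x y · D x D y`. Finally, if `P` is minimal over
`I` and `a ∈ P`, then `s a ∈ √I` for some `s ∉ P`; hence `s D a ∈ √I ⊆ P` and `D a ∈ P`.
-/

namespace Ideal

variable {A : Type*} [CommRing A]

theorem mem_of_nsmul_mem [Algebra ℚ A] (I : Ideal A) {n : ℕ} (hn : n ≠ 0) {x : A}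
    (h : n • x ∈ I) : x ∈ I := by
  have hq : ((n : ℚ)⁻¹ * n) • x = x := by
    rw [inv_mul_cancel₀ (Nat.cast_ne_zero.mpr hn), one_smul]
  rw [← hq, mul_smul, Nat.cast_smul_eq_nsmul]
  exact I.smul_of_tower_mem _ h

theorem exists_notMem_mul_mem_radical_of_mem_minimalPrimes {I P : Ideal A}
    (hP : P ∈ I.minimalPrimes) {a : A} (ha : a ∈ P) : ∃ s ∉ P, s * a ∈ I.radical := by
  have hPprime : P.IsPrime := hP.1.1
  suffices ∃ s ∉ P, ∃ n, s * a ^ n ∈ I by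
    obtain ⟨s, hs, n, hsa⟩ := this
    refine ⟨s, hs, n + 1, ?_⟩
    rw [mul_pow, pow_succ s, pow_succ' a, mul_mul_mul_comm]
    exact I.mul_mem_left _ hsa
  by_contra! hI
  -- A prime `Q ⊇ I` avoiding `(A ∖ P) · aᴺ` lies inside `P`, so equals `P`, yet misses `a ∈ P`.
  obtain ⟨Q, hQ, hIQ, hdisj⟩ := I.exists_le_prime_disjoint (P.primeCompl ⊔ Submonoid.powers a)
    (Set.disjoint_left.mpr fun x hxI hx => by
      obtain ⟨s, hs, _, ⟨n, rfl⟩, rfl⟩ := Submonoid.mem_sup.mp hx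
      exact hI s hs n hxI)
  have hQP : Q ≤ P := fun x hxQ => by
    by_contra hxP
    exact Set.disjoint_left.mp hdisj hxQ (Submonoid.mem_sup_left (show x ∈ P.primeCompl from hxP))
  have hPQ : P ≤ Q := hP.2 ⟨hQ, hIQ⟩ hQP
  exact Set.disjoint_left.mp hdisj (hPQ ha) (Submonoid.mem_sup_right (Submonoid.mem_powers a))

end Ideal

section

variable {R A : Type*} [CommSemiring R] [CommRing A] [Algebra R A]

def Ideal.IsDifferential (D : Derivation R A A) (I : Ideal A) : Prop :=
  ∀ x ∈ I, D x ∈ I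

namespace Derivation

variable (D : Derivation R A A)

theorem map_pow_succ (x : A) (m : ℕ) : D (x ^ (m + 1)) = (m + 1) • (x ^ m * D x) := by
  rw [leibniz_pow, Nat.add_sub_cancel, smul_eq_mul]

theorem mul_map_pow (x : A) (j : ℕ) : x * D (x ^ j) = j • (x ^ j * D x) := by
  cases j with
  | zero => simp
  | succ m => rw [map_pow_succ, mul_smul_comm, ← mul_assoc, ← pow_succ']

end Derivation

namespace Ideal.IsDifferential

variable {D : Derivation R A A} {I : Ideal A}

theorem pow_mul_map_pow_mem [Algebra ℚ A] (hI : I.IsDifferential D) {a : A} {m j : ℕ}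
    (h : a ^ (m + 1) * D a ^ j ∈ I) : a ^ m * D a ^ (j + 2) ∈ I := by
  have hderiv : D a * D (a ^ (m + 1) * D a ^ j) =
      (j • D (D a)) * (a ^ (m + 1) * D a ^ j) + (m + 1) • (a ^ m * D a ^ (j + 2)) := by
    rw [D.leibniz, smul_eq_mul, smul_eq_mul, mul_add, ← mul_assoc, mul_comm (D a) (a ^ _),
      mul_assoc, D.mul_map_pow, D.map_pow_succ]
    simp only [smul_mul_assoc, mul_smul_comm]
    ring_nf
  have hsum := I.mul_mem_left (D a) (hI _ h)
  rw [hderiv] at hsum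
  exact I.mem_of_nsmul_mem m.succ_ne_zero ((I.add_mem_iff_right (I.mul_mem_left _ h)).mp hsum)

theorem map_pow_mem_of_pow_mul_mem [Algebra ℚ A] (hI : I.IsDifferential D) {a : A} (n : ℕ) :
    ∀ {j : ℕ}, a ^ n * D a ^ j ∈ I → D a ^ (j + 2 * n) ∈ I := by
  induction n with
  | zero => simp
  | succ n ih =>
    intro j h
    have := ih (hI.pow_mul_map_pow_mem h)
    rwa [show j + 2 + 2 * n = j + 2 * (n + 1) by ring] at this

theorem radical [Algebra ℚ A] (hI : I.IsDifferential D) : I.radical.IsDifferential D := by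
  rintro a ⟨n, hn⟩
  exact ⟨2 * n, by simpa using hI.map_pow_mem_of_pow_mul_mem n (j := 0) (by simpa using hn)⟩

theorem mul_map_mem_of_mul_mem (hI : I.IsDifferential D) (hrad : I.IsRadical) {x y : A}
    (hxy : x * y ∈ I) : x * D y ∈ I := by
  have hsq : (x * D y) ^ 2 = x * D y * D (x * y) - x * y * (D x * D y) := by
    rw [D.leibniz, smul_eq_mul, smul_eq_mul]; ring
  exact hrad ⟨2, hsq ▸ I.sub_mem (I.mul_mem_left _ (hI _ hxy)) (I.mul_mem_right _ hxy)⟩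

theorem of_mem_minimalPrimes [Algebra ℚ A] (hI : I.IsDifferential D) {P : Ideal A}
    (hP : P ∈ I.minimalPrimes) : P.IsDifferential D := by
  intro a ha
  obtain ⟨s, hsP, hsa⟩ := exists_notMem_mul_mem_radical_of_mem_minimalPrimes hP ha
  have hsDa := hI.radical.mul_map_mem_of_mul_mem (radical_isRadical I) hsa
  have hradP : I.radical ≤ P := (hP.1.1.radical_le_iff).mpr hP.1.2
  exact (hP.1.1.mem_or_mem (hradP hsDa)).resolve_left hsP

end Ideal.IsDifferential

end

theorem minimalPrimes_of_poisson_ideal_are_poisson_general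
    (B : Type*) [CommRing B] [Algebra ℂ B]
    (bracket : B →ₗ[ℂ] B →ₗ[ℂ] B)
    (leibniz : ∀ a b c : B, bracket (a * b) c = a * bracket b c + b * bracket a c)
    (J : Ideal B) (hJ : ∀ a ∈ J, ∀ b : B, bracket a b ∈ J) :
    ∀ P ∈ J.minimalPrimes, ∀ a ∈ P, ∀ b : B, bracket a b ∈ P := by
  let _ : Algebra ℚ B := ((algebraMap ℂ B).comp (algebraMap ℚ ℂ)).toAlgebra
  intro P hP a ha b
  let D : Derivation ℂ B B := Derivation.mk' (bracket.flip b) fun x y => leibniz x y b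
  exact Ideal.IsDifferential.of_mem_minimalPrimes (D := D) (fun x hx => hJ x hx b) hP a ha

/-- If `B` is a commutative Noetherian Poisson algebra over `ℂ` and `J` is a
Poisson ideal, then every minimal prime over `J` is a Poisson ideal. -/
theorem minimalPrimes_of_poisson_ideal_are_poisson
    (B : Type*) [CommRing B] [Algebra ℂ B] [IsNoetherianRing B]
    (bracket : B →ₗ[ℂ] B →ₗ[ℂ] B)
    (antisymm : ∀ a b : B, bracket a b = - bracket b a)
    (jacobi : ∀ a b c : B,
      bracket a (bracket b c) = bracket (bracket a b) c + bracket b (bracket a c))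
    (leibniz : ∀ a b c : B, bracket (a * b) c = a * bracket b c + b * bracket a c)
    (J : Ideal B) (hJ : ∀ a ∈ J, ∀ b : B, bracket a b ∈ J) :
    ∀ P ∈ J.minimalPrimes, ∀ a ∈ P, ∀ b : B, bracket a b ∈ P :=
  minimalPrimes_of_poisson_ideal_are_poisson_general B bracket leibniz J hJ
end

section
/- Let 𝔫 be a finite-dimensional abelian Lie algebra over ℂ acting on a vector space M by commuting operators, together with an operator δ on M satisfying [δ, x] = λ(x)·x as operators on M for each x in 𝔫, where the induced grading on Sym 𝔫 has all weights strictly positive. If M ≠ 0 is finitely generated as a Sym 𝔫-module, then 𝔫·M ≠ M. -/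
open MvPolynomial

/-- weighted degree of a monomial exponent -/
def Wt {n : ℕ} (w : Fin n → ℕ+) (α : Fin n →₀ ℕ) : ℕ := α.sum fun i k => k * (w i : ℕ)

/-- weighted Euler derivation -/
noncomputable def Dw {n : ℕ} (w : Fin n → ℕ+) :
    Derivation ℂ (MvPolynomial (Fin n) ℂ) (MvPolynomial (Fin n) ℂ) :=
  MvPolynomial.mkDerivation ℂ (fun i => (((w i : ℕ) : ℂ)) • X i)

theorem Dw_monomial {n : ℕ} (w : Fin n → ℕ+) (α : Fin n →₀ ℕ) (c : ℂ) :
    Dw w (monomial α c) = ((Wt w α : ℕ) : ℂ) • monomial α c := by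
  rw [Dw, mkDerivation_monomial]
  have h1 : (α.sum fun i k => (monomial (α - Finsupp.single i 1) (k : ℂ)) •
        ((((w i : ℕ) : ℂ)) • (X i : MvPolynomial (Fin n) ℂ)))
      = α.sum fun i k => (((k * (w i : ℕ) : ℕ) : ℂ)) • monomial α (1 : ℂ) := by
    refine Finsupp.sum_congr fun i hi => ?_
    have hα : Finsupp.single i 1 ≤ α := by
      rw [Finsupp.single_le_iff]
      exact Nat.one_le_iff_ne_zero.mpr (Finsupp.mem_support_iff.mp hi)
    have h2 : (monomial (α - Finsupp.single i 1) ((α i : ℂ))) * X i = monomial α ((α i : ℂ)) := by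
      rw [X, monomial_mul, mul_one, tsub_add_cancel_of_le hα]
    rw [smul_eq_mul, mul_smul_comm, h2]
    push_cast
    rw [mul_comm ((α i : ℂ)), mul_smul]
    congr 1
    rw [smul_monomial, smul_eq_mul, mul_one]
  rw [h1, Finsupp.sum, ← Finset.sum_smul, ← Nat.cast_sum, smul_comm, smul_monomial,
    smul_eq_mul, mul_one]
  congr 2

theorem Dw_coeff {n : ℕ} (w : Fin n → ℕ+) (q : MvPolynomial (Fin n) ℂ) (β : Fin n →₀ ℕ) :
    coeff β (Dw w q) = ((Wt w β : ℕ) : ℂ) * coeff β q := by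
  have hq : Dw w q = ∑ α ∈ q.support, ((Wt w α : ℕ) : ℂ) • monomial α (coeff α q) := by
    conv_lhs => rw [q.as_sum]
    rw [map_sum]
    exact Finset.sum_congr rfl fun α _ => Dw_monomial w α _
  rw [hq, coeff_sum]
  have h2 : ∀ α ∈ q.support, coeff β (((Wt w α : ℕ) : ℂ) • monomial α (coeff α q))
      = if α = β then ((Wt w α : ℕ) : ℂ) * coeff α q else 0 := by
    intro α _
    rw [coeff_smul, coeff_monomial, smul_eq_mul]
    split <;> simp
  rw [Finset.sum_congr rfl h2, Finset.sum_ite_eq' q.support β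
    (fun α => ((Wt w α : ℕ) : ℂ) * coeff α q)]
  split
  · rfl
  · rw [notMem_support_iff.mp (by assumption), mul_zero]

/-- Let `𝔫` be a finite-dimensional abelian Lie algebra over `ℂ` (with basis
indexed by `Fin n`, so `Sym 𝔫 = MvPolynomial (Fin n) ℂ`), acting on a vector space `M` by
commuting operators, i.e. `M` is a `Sym 𝔫`-module, together with an operator `δ` satisfying
`[δ, xᵢ] = wᵢ·xᵢ` as operators on `M`, with all weights `wᵢ` strictly positive integers.
If `M ≠ 0` is finitely generated over `Sym 𝔫`, then `𝔫·M ≠ M`. -/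
theorem n_smul_ne_top_of_positive_weights
    (n : ℕ) (M : Type*) [AddCommGroup M] [Module ℂ M]
    [Module (MvPolynomial (Fin n) ℂ) M]
    [IsScalarTower ℂ (MvPolynomial (Fin n) ℂ) M]
    [Module.Finite (MvPolynomial (Fin n) ℂ) M]
    [Nontrivial M]
    (δ : M →ₗ[ℂ] M) (w : Fin n → ℕ+)
    (hδ : ∀ (i : Fin n) (m : M),
      δ ((X i : MvPolynomial (Fin n) ℂ) • m) - (X i : MvPolynomial (Fin n) ℂ) • δ m
        = ((w i : ℕ) : ℂ) • ((X i : MvPolynomial (Fin n) ℂ) • m)) :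
    (Ideal.span (Set.range (X : Fin n → MvPolynomial (Fin n) ℂ))) •
        (⊤ : Submodule (MvPolynomial (Fin n) ℂ) M) ≠ ⊤ := by
  set R := MvPolynomial (Fin n) ℂ with hR
  intro htop
  -- the key commutation relation
  have comm_key : ∀ (q : R) (m : M), δ (q • m) = q • δ m + (Dw w q) • m := by
    intro q
    induction q using MvPolynomial.induction_on with
    | C a =>
      intro m
      have h1 : (C a : R) • m = a • m := by
        rw [← algebraMap_smul R a m]; rfl
      have h2 : (C a : R) • δ m = a • δ m := by
        rw [← algebraMap_smul R a (δ m)]; rfl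
      rw [h1, h2, map_smul, derivation_C, zero_smul, add_zero]
    | add p q hp hq =>
      intro m
      rw [add_smul, map_add, map_add, add_smul, add_smul, hp, hq]
      abel
    | mul_X p i hp =>
      intro m
      have hX : δ ((X i : R) • m) = (X i : R) • δ m + ((w i : ℕ) : ℂ) • ((X i : R) • m) := by
        have h := hδ i m
        rw [sub_eq_iff_eq_add'] at h
        exact h
      rw [mul_smul, hp, hX, smul_add, Derivation.leibniz]
      rw [show (Dw w) (X i) = ((w i : ℕ) : ℂ) • (X i : R) from by rw [Dw, mkDerivation_X]]
      simp only [smul_eq_mul]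
      rw [← smul_assoc (((w i : ℕ) : ℂ)) (X i : R) m]
      simp only [← mul_smul]
      rw [add_smul, mul_comm ((Dw w) p) (X i)]
      abel
  obtain ⟨r, hrI, hr⟩ := Submodule.exists_mem_and_smul_eq_self_of_fg_of_le_smul
      (Ideal.span (Set.range X)) ⊤ (Module.Finite.fg_top (R := R)) htop.ge
  have hr' : ∀ m : M, r • m = m := fun m => hr m Submodule.mem_top
  have hc0 : coeff 0 r = 0 := by
    have hle : Ideal.span (Set.range (X : Fin n → R)) ≤
        RingHom.ker (constantCoeff (R := ℂ) (σ := Fin n)) := by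
      rw [Ideal.span_le]
      rintro _ ⟨i, rfl⟩
      simp [RingHom.mem_ker]
    have := hle hrI
    rwa [RingHom.mem_ker, constantCoeff_eq] at this
  set Dl : Module.End ℂ R := (Dw w).toLinearMap with hDl
  have hDlapp : ∀ q : R, Dl q = Dw w q := fun q => rfl
  have h1 : ∀ m : M, (Dw w r) • m = 0 := by
    intro m
    have h := comm_key r m
    rw [hr' m, hr' (δ m)] at h
    exact (left_eq_add.mp h)
  have hk : ∀ (k : ℕ) (m : M), ((Dl ^ (k + 1)) r) • m = 0 := by
    intro k
    induction k with
    | zero => intro m; rw [pow_one, hDlapp]; exact h1 m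
    | succ k ih =>
      intro m
      have h := comm_key ((Dl ^ (k + 1)) r) m
      rw [ih m, ih (δ m), map_zero] at h
      have hpow : (Dl ^ (k + 1 + 1)) r = Dw w ((Dl ^ (k + 1)) r) := by
        rw [pow_succ', Module.End.mul_apply, hDlapp]
      rw [hpow]
      have h2 := h.symm
      rwa [zero_add] at h2
  have key : ∀ (T : Finset ℕ) (s : R) (m : M),
      s • m = m → (∀ k : ℕ, ((Dl ^ (k + 1)) s) • m = 0) →
      (∀ α ∈ s.support, 0 < Wt w α ∧ Wt w α ∈ T) → m = 0 := by
    intro T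
    induction T using Finset.induction_on with
    | empty =>
      intro s m hsm _ hsupp
      have hs0 : s = 0 := by
        rw [← support_eq_empty]
        exact Finset.eq_empty_iff_forall_notMem.mpr fun α hα =>
          Finset.notMem_empty _ (hsupp α hα).2
      rw [hs0, zero_smul] at hsm
      exact hsm.symm
    | @insert j S hj ih =>
      intro s m hsm hDk hsupp
      set c : ℂ := ((j : ℂ))⁻¹ with hc
      set s' : R := s - c • (Dl s) with hs'def
      have hs'm : s' • m = m := by
        rw [hs'def, sub_smul, smul_assoc,
          show Dl s = (Dl ^ (0 + 1)) s from by rw [pow_one], hDk 0, smul_zero, sub_zero, hsm]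
      have hDk' : ∀ k : ℕ, ((Dl ^ (k + 1)) s') • m = 0 := by
        intro k
        have hpow : (Dl ^ (k + 1)) (Dl s) = (Dl ^ (k + 1 + 1)) s := by
          rw [pow_succ Dl (k + 1), Module.End.mul_apply]
        rw [hs'def, map_sub, map_smul, sub_smul, smul_assoc, hpow, hDk k, hDk (k + 1),
          smul_zero, sub_zero]
      have hsupp' : ∀ α ∈ s'.support, 0 < Wt w α ∧ Wt w α ∈ S := by
        intro α hα
        have hcα : coeff α s' = (1 - c * ((Wt w α : ℕ) : ℂ)) * coeff α s := by
          rw [hs'def, coeff_sub, coeff_smul, hDlapp, Dw_coeff w s α, smul_eq_mul]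
          ring
        have hαs : coeff α s ≠ 0 := by
          intro h0
          exact mem_support_iff.mp hα (by rw [hcα, h0, mul_zero])
        obtain ⟨hpos, hmem⟩ := hsupp α (mem_support_iff.mpr hαs)
        refine ⟨hpos, ?_⟩
        rcases Finset.mem_insert.mp hmem with he | hS
        · exfalso
          rcases Nat.eq_zero_or_pos j with hj0 | hj0
          · omega
          · have hone : c * ((Wt w α : ℕ) : ℂ) = 1 := by
              rw [he, hc]
              have : (j : ℂ) ≠ 0 := Nat.cast_ne_zero.mpr hj0.ne'
              field_simp
            exact mem_support_iff.mp hα (by rw [hcα, hone, sub_self, zero_mul])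
        · exact hS
      exact ih s' m hs'm hDk' hsupp'
  obtain ⟨m, hm⟩ := exists_ne (0 : M)
  apply hm
  refine key (r.support.image (Wt w)) r m (hr' m) (fun k => hk k m) fun α hα => ⟨?_, ?_⟩
  · have hα0 : α ≠ 0 := by
      rintro rfl
      exact mem_support_iff.mp hα hc0
    rw [Wt, Finsupp.sum]
    apply Finset.sum_pos
    · intro i hi
      exact Nat.mul_pos (Nat.pos_of_ne_zero (Finsupp.mem_support_iff.mp hi)) (w i).pos
    · exact Finsupp.support_nonempty_iff.mpr hα0
  · exact Finset.mem_image_of_mem _ hα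
end

section
/- Let 𝔫 be a finite-dimensional nilpotent Lie algebra over ℂ and U₊ the augmentation ideal of its universal enveloping algebra U(𝔫). Then for every m ≥ 1, the m-th power (U₊)^m has finite codimension in U₊ (equivalently, U(𝔫)/(U₊)^m is finite dimensional over ℂ). -/
/-!
`U(L)` is spanned by the powers `V ^ k` of `V = ι(L)`. Since the augmentation ideal `U₊` is a
two-sided ideal containing `V`, every `V ^ k` with `k ≥ m` lies in `U₊ ^ m`, so `U(L) ⧸ U₊ ^ m` is
spanned by the images of the finitely many finite-dimensional spaces `V ^ k` with `k < m`.
-/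

attribute [local instance 100] LieRing.ofAssociativeRing

namespace Submodule

variable {R A : Type*} [CommSemiring R] [Semiring A] [Algebra R A]

theorem iSup_pow_eq_top_of_adjoin_eq_top {V : Submodule R A}
    (hV : Algebra.adjoin R (V : Set A) = ⊤) : ⨆ n : ℕ, V ^ n = ⊤ := by
  have mul_closed : (⨆ i : ℕ, V ^ i) * (⨆ j : ℕ, V ^ j) ≤ ⨆ n : ℕ, V ^ n := by
    simp only [iSup_mul, mul_iSup, ← pow_add]
    exact iSup_le fun i => iSup_le fun j => le_iSup (V ^ ·) _
  suffices ∀ x ∈ Algebra.adjoin R (V : Set A), x ∈ ⨆ n : ℕ, V ^ n from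
    top_unique fun x _ => this x (hV ▸ Algebra.mem_top)
  intro x hx
  induction hx using Algebra.adjoin_induction with
  | mem x hx => exact le_iSup (V ^ ·) 1 (by rwa [pow_one])
  | algebraMap r =>
    exact le_iSup (V ^ ·) 0 (by rw [pow_zero]; exact algebraMap_mem r)
  | add x y _ _ hx hy => exact add_mem hx hy
  | mul x y _ _ hx hy => exact mul_closed (mul_mem_mul hx hy)

theorem pow_mul_top_le {I : Submodule R A} (hI : I * ⊤ ≤ I) {m : ℕ} (hm : m ≠ 0) :
    I ^ m * ⊤ ≤ I ^ m := by
  obtain ⟨k, rfl⟩ := Nat.exists_eq_succ_of_ne_zero hm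
  rw [pow_succ, mul_assoc]
  exact mul_le_mul' le_rfl hI

theorem pow_le_pow_of_le_of_mul_top_le {V I : Submodule R A} (hVI : V ≤ I) (hI : I * ⊤ ≤ I)
    {m n : ℕ} (hm : m ≠ 0) (hmn : m ≤ n) : V ^ n ≤ I ^ m := by
  obtain ⟨k, rfl⟩ := Nat.exists_eq_add_of_le hmn
  calc V ^ (m + k) = V ^ m * V ^ k := pow_add V m k
    _ ≤ I ^ m * ⊤ := mul_le_mul' (pow_le_pow_left' hVI m) le_top
    _ ≤ I ^ m := pow_mul_top_le hI hm

theorem pow_sup_iSup_pow_eq_top {V I : Submodule R A} (hV : Algebra.adjoin R (V : Set A) = ⊤)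
    (hVI : V ≤ I) (hI : I * ⊤ ≤ I) {m : ℕ} (hm : m ≠ 0) :
    I ^ m ⊔ ⨆ k : Fin m, V ^ (k : ℕ) = ⊤ := by
  refine top_unique ((iSup_pow_eq_top_of_adjoin_eq_top hV).ge.trans (iSup_le fun n => ?_))
  rcases lt_or_ge n m with hn | hn
  · exact le_sup_of_le_right (le_iSup (fun k : Fin m => V ^ (k : ℕ)) ⟨n, hn⟩)
  · exact le_sup_of_le_left (pow_le_pow_of_le_of_mul_top_le hVI hI hm hn)

end Submodule

theorem Submodule.finite_quotient_pow_of_adjoin_eq_top {R A : Type*} [CommRing R] [Ring A]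
    [Algebra R A] {V I : Submodule R A} (hVfg : V.FG) (hV : Algebra.adjoin R (V : Set A) = ⊤)
    (hVI : V ≤ I) (hI : I * ⊤ ≤ I) {m : ℕ} (hm : m ≠ 0) : Module.Finite R (A ⧸ I ^ m) := by
  have hS : (⨆ k : Fin m, V ^ (k : ℕ)).FG := fg_iSup _ fun k => hVfg.pow k
  rw [Module.finite_def, ← (map_mkQ_eq_top _ _).2 (pow_sup_iSup_pow_eq_top hV hVI hI hm)]
  exact hS.map _

theorem AlgHom.ker_mul_top_le {R A B : Type*} [CommSemiring R] [Semiring A] [Algebra R A]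
    [Semiring B] [Algebra R B] (f : A →ₐ[R] B) :
    LinearMap.ker f.toLinearMap * ⊤ ≤ LinearMap.ker f.toLinearMap :=
  Submodule.mul_le.2 fun a ha b _ => by simp_all

namespace UniversalEnvelopingAlgebra

variable (R : Type*) {L : Type*} [CommRing R] [LieRing L] [LieAlgebra R L]

theorem adjoin_range_ι :
    Algebra.adjoin R (Set.range (ι R : L → UniversalEnvelopingAlgebra R L)) = ⊤ := by
  have hι : ⇑(ι R : L →ₗ⁅R⁆ UniversalEnvelopingAlgebra R L) =
      mkAlgHom R L ∘ TensorAlgebra.ι R := rfl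
  rw [hι, Set.range_comp, ← AlgHom.map_adjoin, TensorAlgebra.adjoin_range_ι, Algebra.map_top,
    AlgHom.range_eq_top]
  exact RingCon.mkₐ_surjective _

end UniversalEnvelopingAlgebra

theorem augmentation_ideal_power_finite_codim_general
    (L : Type*) [LieRing L] [LieAlgebra ℂ L]
    [FiniteDimensional ℂ L]
    (counit : UniversalEnvelopingAlgebra ℂ L →ₐ[ℂ] ℂ)
    (hcounit : counit = UniversalEnvelopingAlgebra.lift ℂ (0 : L →ₗ⁅ℂ⁆ ℂ))
    (Up : Submodule ℂ (UniversalEnvelopingAlgebra ℂ L))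
    (hUp : Up = LinearMap.ker counit.toLinearMap)
    (m : ℕ) (hm : 1 ≤ m) :
    FiniteDimensional ℂ (UniversalEnvelopingAlgebra ℂ L ⧸ (Up ^ m)) := by
  subst hUp
  let ι : L →ₗ[ℂ] UniversalEnvelopingAlgebra ℂ L := (UniversalEnvelopingAlgebra.ι ℂ : L →ₗ⁅ℂ⁆ _)
  have range_ι_le_ker : LinearMap.range ι ≤ LinearMap.ker counit.toLinearMap := by
    rintro _ ⟨x, rfl⟩
    simp [ι, hcounit]
  refine Submodule.finite_quotient_pow_of_adjoin_eq_top (Submodule.fg_range ι) ?_ range_ι_le_ker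
    counit.ker_mul_top_le (by omega)
  rw [LinearMap.coe_range]
  exact UniversalEnvelopingAlgebra.adjoin_range_ι ℂ

/-- Let `𝔫` be a finite-dimensional nilpotent Lie algebra over `ℂ` and `U₊`
the augmentation ideal of `U(𝔫)` (the kernel of the counit `U(𝔫) → ℂ` sending `𝔫` to `0`).
Then for every `m ≥ 1`, `(U₊)^m` has finite codimension in `U₊`; equivalently,
`U(𝔫)/(U₊)^m` is finite dimensional over `ℂ`. -/
theorem augmentation_ideal_power_finite_codim
    (L : Type*) [LieRing L] [LieAlgebra ℂ L]
    [FiniteDimensional ℂ L] [LieRing.IsNilpotent L]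
    (counit : UniversalEnvelopingAlgebra ℂ L →ₐ[ℂ] ℂ)
    (hcounit : counit = UniversalEnvelopingAlgebra.lift ℂ (0 : L →ₗ⁅ℂ⁆ ℂ))
    (Up : Submodule ℂ (UniversalEnvelopingAlgebra ℂ L))
    (hUp : Up = LinearMap.ker counit.toLinearMap)
    (m : ℕ) (hm : 1 ≤ m) :
    FiniteDimensional ℂ (UniversalEnvelopingAlgebra ℂ L ⧸ (Up ^ m)) :=
  augmentation_ideal_power_finite_codim_general L counit hcounit Up hUp m hm
end
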